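/- arXiv:math/9811084 — 7 statements merged into one kernel-verified Lean document; each statement's English description precedes it below -/
import Mathlib

section
/- Let B⁺, B⁻, T⁺, T⁻ : ℤ → ℕ be finitely supported and satisfy the edge-count relation (⋆). Then for every function x : ℤ → ℤ, setting y(q) = x(q) − x(q−1) for all q ∈ ℤ, one has ∑_{p ∈ ℤ} x(p)·((B⁺(p) : ℤ) − B⁻(p)) + ∑_{q ∈ ℤ} y(q)·((T⁺(q) : ℤ) − T⁻(q)) = 0 (both sums are finite since B± and T± are finitely supported). -/
/-- Main theorem (combinatorial content): given finitely supported counts of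
branch points `B⁺, B⁻` and triple points `T⁺, T⁻` by Alexander index, satisfying
the edge-count relation (⋆), for any weights `x : ℤ → ℤ` with `y q = x q - x (q-1)`,
the weighted signed sums cancel. -/
theorem alexander_numbering_formula
    (Bp Bm Tp Tm : ℤ → ℕ)
    (hBp : (Function.support Bp).Finite) (hBm : (Function.support Bm).Finite)
    (hTp : (Function.support Tp).Finite) (hTm : (Function.support Tm).Finite)
    (hstar : ∀ p : ℤ, ((Bp p : ℤ) - (Bm p : ℤ)) =
      (((Tp (p + 1) : ℤ) - (Tm (p + 1) : ℤ)) - ((Tp p : ℤ) - (Tm p : ℤ))))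
    (x : ℤ → ℤ) (y : ℤ → ℤ) (hy : ∀ q : ℤ, y q = x q - x (q - 1)) :
    (∑ᶠ p : ℤ, x p * ((Bp p : ℤ) - (Bm p : ℤ))) +
      (∑ᶠ q : ℤ, y q * ((Tp q : ℤ) - (Tm q : ℤ))) = 0 := by
  set f : ℤ → ℤ := fun q => (Tp q : ℤ) - (Tm q : ℤ) with hf
  have hfsupp : (Function.support f).Finite := by
    apply Set.Finite.subset (hTp.union hTm)
    intro q hq
    simp only [Function.mem_support, hf] at hq
    by_contra h
    simp only [Set.mem_union, Function.mem_support, not_or, not_not] at h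
    rw [h.1, h.2] at hq; simp at hq
  have h1 : (Function.support fun p => x p * f (p + 1)).Finite := by
    apply Set.Finite.subset (hfsupp.image (fun q => q - 1))
    intro p hp
    have : f (p + 1) ≠ 0 := fun h => hp (by simp [h])
    exact ⟨p + 1, this, by ring⟩
  have h2 : (Function.support fun p => x p * f p).Finite := by
    apply Set.Finite.subset hfsupp
    intro p hp
    exact fun h => hp (by simp [Function.mem_support.mp, h])
  calc (∑ᶠ p : ℤ, x p * ((Bp p : ℤ) - (Bm p : ℤ))) +
      (∑ᶠ q : ℤ, y q * ((Tp q : ℤ) - (Tm q : ℤ)))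
      = (∑ᶠ p : ℤ, (x p * f (p + 1) - x p * f p)) +
        (∑ᶠ q : ℤ, (x q * f q - x (q - 1) * f q)) := by
        congr 1
        · exact finsum_congr fun p => by rw [hstar p]; ring
        · exact finsum_congr fun q => by rw [hy q]; ring
    _ = ((∑ᶠ p : ℤ, x p * f (p + 1)) - ∑ᶠ p : ℤ, x p * f p) +
        ((∑ᶠ q : ℤ, x q * f q) - ∑ᶠ q : ℤ, x (q - 1) * f q) := by
        rw [finsum_sub_distrib h1 h2, finsum_sub_distrib h2]
        apply Set.Finite.subset hfsupp
        intro q hq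
        exact fun h => hq (by simp [h])
    _ = 0 := by
        have : (∑ᶠ p : ℤ, x p * f (p + 1)) = ∑ᶠ q : ℤ, x (q - 1) * f q := by
          rw [← finsum_comp_equiv (Equiv.addRight (1 : ℤ))
            (f := fun q => x (q - 1) * f q)]
          exact finsum_congr fun p => by simp
        rw [this]; ring
end

section
/- Let B⁺, B⁻, T⁺, T⁻ : ℤ → ℕ be finitely supported and satisfy the edge-count relation (⋆). Then ∑_{p ∈ ℤ} (p·(p+1)/2)·((B⁺(p) : ℤ) − B⁻(p)) + ∑_{q ∈ ℤ} q·((T⁺(q) : ℤ) − T⁻(q)) = 0, where p·(p+1)/2 denotes the (integer-valued) triangular number weight. -/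
/-- Corollary with weights `x p = p (p + 1) / 2` and `y q = q`. -/
theorem triangular_weight_formula
    (Bp Bm Tp Tm : ℤ → ℕ)
    (hBp : (Function.support Bp).Finite) (hBm : (Function.support Bm).Finite)
    (hTp : (Function.support Tp).Finite) (hTm : (Function.support Tm).Finite)
    (hstar : ∀ p : ℤ, ((Bp p : ℤ) - (Bm p : ℤ)) =
      (((Tp (p + 1) : ℤ) - (Tm (p + 1) : ℤ)) - ((Tp p : ℤ) - (Tm p : ℤ)))) :
    (∑ᶠ p : ℤ, (p * (p + 1) / 2) * ((Bp p : ℤ) - (Bm p : ℤ))) +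
      (∑ᶠ q : ℤ, q * ((Tp q : ℤ) - (Tm q : ℤ))) = 0 := by
  set f : ℤ → ℤ := fun q => (Tp q : ℤ) - Tm q with hf
  have hfs : (Function.support f).Finite := by
    apply Set.Finite.subset (hTp.union hTm)
    intro q hq
    simp only [Function.mem_support, hf] at hq
    by_contra h
    simp only [Set.mem_union, Function.mem_support, not_or, not_not] at h
    simp [h.1, h.2] at hq
  set x : ℤ → ℤ := fun p => p * (p + 1) / 2 with hx
  have h1 : (Function.support fun p => x p * f (p + 1)).Finite := by
    apply Set.Finite.subset (hfs.image (fun q => q - 1))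
    intro p hp
    simp only [Function.mem_support] at hp
    have : f (p + 1) ≠ 0 := fun h => hp (by simp [h])
    exact ⟨p + 1, this, by ring⟩
  have h2 : (Function.support fun p => x p * f p).Finite :=
    hfs.subset (fun p hp => by
      simp only [Function.mem_support] at hp ⊢; exact fun h => hp (by simp [h]))
  have h3 : (Function.support fun q => q * f q).Finite :=
    hfs.subset (fun p hp => by
      simp only [Function.mem_support] at hp ⊢; exact fun h => hp (by simp [h]))
  have key : ∀ p : ℤ, (Bp p : ℤ) - Bm p = f (p + 1) - f p := hstar
  calc (∑ᶠ p : ℤ, x p * ((Bp p : ℤ) - (Bm p : ℤ))) + (∑ᶠ q : ℤ, q * f q)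
      = (∑ᶠ p : ℤ, (x p * f (p + 1) - x p * f p)) + (∑ᶠ q : ℤ, q * f q) := by
        congr 1
        exact finsum_congr fun p => by rw [key p]; ring
    _ = ((∑ᶠ p : ℤ, x p * f (p + 1)) - (∑ᶠ p : ℤ, x p * f p)) + (∑ᶠ q : ℤ, q * f q) := by
        rw [finsum_sub_distrib h1 h2]
    _ = ((∑ᶠ q : ℤ, x (q - 1) * f q) - (∑ᶠ p : ℤ, x p * f p)) + (∑ᶠ q : ℤ, q * f q) := by
        congr 2
        have := finsum_comp_equiv (Equiv.addRight (1 : ℤ))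
          (f := fun q : ℤ => x (q - 1) * f q)
        simp only [Equiv.coe_addRight, add_sub_cancel_right] at this
        exact this
    _ = ∑ᶠ q : ℤ, (x (q - 1) * f q - x q * f q + q * f q) := by
        have hsub : (Function.support fun q => x (q - 1) * f q - x q * f q).Finite :=
          hfs.subset (fun q hq => by
            simp only [Function.mem_support] at hq ⊢
            exact fun h => hq (by simp [h]))
        have hshift : (Function.support fun q => x (q - 1) * f q).Finite :=
          hfs.subset (fun q hq => by
            simp only [Function.mem_support] at hq ⊢
            exact fun h => hq (by simp [h]))
        rw [finsum_add_distrib hsub h3, finsum_sub_distrib hshift h2]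
    _ = 0 := by
        rw [finsum_eq_zero_of_forall_eq_zero]
        intro q
        have hcoef : x (q - 1) - x q + q = 0 := by
          have e1 : (q - 1) * (q - 1 + 1) = q * q - q := by ring
          have e2 : q * (q + 1) = q * q + q := by ring
          have hd1 : (2 : ℤ) ∣ q * q - q := by
            have := Int.even_mul_succ_self (q - 1)
            rcases this with ⟨k, hk⟩
            exact ⟨k, by nlinarith⟩
          have hd2 : (2 : ℤ) ∣ q * q + q := by
            rcases Int.even_mul_succ_self q with ⟨k, hk⟩
            exact ⟨k, by nlinarith⟩
          simp only [hx, e1, e2]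
          omega
        have : x (q - 1) * f q - x q * f q + q * f q = (x (q - 1) - x q + q) * f q := by ring
        rw [this, hcoef, zero_mul]
end

section
/- Let B⁺, B⁻, T⁺, T⁻ : ℤ → ℕ be finitely supported and satisfy the edge-count relation (⋆). Then ∑_{p ∈ ℤ} p·((B⁺(p) : ℤ) − B⁻(p)) + ∑_{q ∈ ℤ} ((T⁺(q) : ℤ) − T⁻(q)) = 0. -/
/-- Corollary with weights `x p = p` and `y q = 1`. -/
theorem linear_weight_formula
    (Bp Bm Tp Tm : ℤ → ℕ)
    (hBp : (Function.support Bp).Finite) (hBm : (Function.support Bm).Finite)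
    (hTp : (Function.support Tp).Finite) (hTm : (Function.support Tm).Finite)
    (hstar : ∀ p : ℤ, ((Bp p : ℤ) - (Bm p : ℤ)) =
      (((Tp (p + 1) : ℤ) - (Tm (p + 1) : ℤ)) - ((Tp p : ℤ) - (Tm p : ℤ)))) :
    (∑ᶠ p : ℤ, p * ((Bp p : ℤ) - (Bm p : ℤ))) +
      (∑ᶠ q : ℤ, ((Tp q : ℤ) - (Tm q : ℤ))) = 0 := by
  set f : ℤ → ℤ := fun q => (Tp q : ℤ) - (Tm q : ℤ) with hf
  have hfin : (Function.support f).Finite := by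
    apply Set.Finite.subset (hTp.union hTm)
    intro q hq
    by_contra h
    simp only [Set.mem_union, Function.mem_support, not_or, not_not] at h
    exact hq (by simp [hf, h.1, h.2])
  have hfin1 : (Function.support fun p : ℤ => p * f (p + 1)).Finite := by
    apply Set.Finite.subset ((hfin.image (fun x => x - 1)))
    intro p hp
    have : f (p + 1) ≠ 0 := fun h => hp (by simp [h])
    exact ⟨p + 1, this, by ring⟩
  have hfin2 : (Function.support fun p : ℤ => p * f p).Finite := by
    apply Set.Finite.subset hfin
    intro p hp h
    exact hp (by simp [h])
  have hfin3 : (Function.support fun q : ℤ => (q - 1) * f q).Finite := by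
    apply Set.Finite.subset hfin
    intro p hp h
    exact hp (by simp [h])
  have h1 : (∑ᶠ p : ℤ, p * ((Bp p : ℤ) - (Bm p : ℤ)))
      = (∑ᶠ p : ℤ, (p * f (p + 1) - p * f p)) := by
    apply finsum_congr
    intro p
    rw [hstar p]
    ring
  have h2 : (∑ᶠ p : ℤ, (p * f (p + 1) - p * f p))
      = (∑ᶠ p : ℤ, p * f (p + 1)) - ∑ᶠ p : ℤ, p * f p :=
    finsum_sub_distrib hfin1 hfin2
  have h3 : (∑ᶠ p : ℤ, p * f (p + 1)) = ∑ᶠ q : ℤ, (q - 1) * f q := by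
    have := finsum_comp_equiv (Equiv.addRight (1 : ℤ)) (f := fun q : ℤ => (q - 1) * f q)
    simpa using this
  have h4 : (∑ᶠ q : ℤ, (q - 1) * f q) - (∑ᶠ p : ℤ, p * f p) = -∑ᶠ q : ℤ, f q := by
    rw [← finsum_sub_distrib hfin3 hfin2, ← finsum_neg_distrib]
    apply finsum_congr
    intro q
    ring
  rw [h1, h2, h3, h4]
  ring
end

section
/- Let B⁺, B⁻, T⁺, T⁻ : ℤ → ℕ be finitely supported and satisfy the edge-count relation (⋆). If B⁺(p) = 0 and B⁻(p) = 0 for all integers p, then T⁺(p) = T⁻(p) for all integers p. -/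
/-! Without branch points, (⋆) says that `T⁺ - T⁻` is invariant under `p ↦ p + 1`, hence
constant on `ℤ`; having finite support, that constant is `0`. -/

open Function

theorem Function.Periodic.eq_zero_of_support_finite {M : Type*} [Zero M] {f : ℤ → M}
    (hf : Periodic f 1) (hs : (support f).Finite) : f = 0 := by
  obtain ⟨q, hq⟩ := hs.infinite_compl.nonempty
  ext p
  calc f p = f (q + (p - q) * 1) := by ring_nf
    _ = f q := hf.int_mul (p - q) q
    _ = 0 := notMem_support.mp hq

theorem no_branch_points_triple_points_balance_general
    (Bp Bm Tp Tm : ℤ → ℕ)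
    (hTp : (Function.support Tp).Finite) (hTm : (Function.support Tm).Finite)
    (hstar : ∀ p : ℤ, ((Bp p : ℤ) - (Bm p : ℤ)) =
      (((Tp (p + 1) : ℤ) - (Tm (p + 1) : ℤ)) - ((Tp p : ℤ) - (Tm p : ℤ))))
    (hB : ∀ p : ℤ, Bp p = 0 ∧ Bm p = 0) :
    ∀ p : ℤ, Tp p = Tm p := by
  set balance : ℤ → ℤ := fun p => (Tp p : ℤ) - Tm p
  have hperiodic : Periodic balance 1 := fun p => by
    have := hstar p
    simp only [(hB p).1, (hB p).2, Nat.cast_zero, sub_zero] at this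
    linarith
  have hsupport : (support balance).Finite :=
    (hTp.union hTm).subset fun p hp => by
      by_contra h
      simp_all [balance]
  intro p
  have := congrFun (hperiodic.eq_zero_of_support_finite hsupport) p
  simpa [balance, sub_eq_zero] using this

/-- Corollary: with no branch points, positive and negative triple point
counts agree at each Alexander index. -/
theorem no_branch_points_triple_points_balance
    (Bp Bm Tp Tm : ℤ → ℕ)
    (hBp : (Function.support Bp).Finite) (hBm : (Function.support Bm).Finite)
    (hTp : (Function.support Tp).Finite) (hTm : (Function.support Tm).Finite)
    (hstar : ∀ p : ℤ, ((Bp p : ℤ) - (Bm p : ℤ)) =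
      (((Tp (p + 1) : ℤ) - (Tm (p + 1) : ℤ)) - ((Tp p : ℤ) - (Tm p : ℤ))))
    (hB : ∀ p : ℤ, Bp p = 0 ∧ Bm p = 0) :
    ∀ p : ℤ, Tp p = Tm p :=
  no_branch_points_triple_points_balance_general Bp Bm Tp Tm hTp hTm hstar hB
end

section
/- Let B⁺, B⁻, T⁺, T⁻ : ℤ → ℕ be finitely supported and satisfy the edge-count relation (⋆). Then for every integer p, (T⁺(p) : ℤ) − T⁻(p) = ∑_{i < p} ((B⁺(i) : ℤ) − B⁻(i)), where the sum (over all integers i < p) is finite since B± are finitely supported. -/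
/-- Final corollary, first equality: the signed triple point count at index `p`
equals the signed branch point count over all indices `i < p`. -/
theorem triple_points_eq_sum_branch_below
    (Bp Bm Tp Tm : ℤ → ℕ)
    (hBp : (Function.support Bp).Finite) (hBm : (Function.support Bm).Finite)
    (hTp : (Function.support Tp).Finite) (hTm : (Function.support Tm).Finite)
    (hstar : ∀ p : ℤ, ((Bp p : ℤ) - (Bm p : ℤ)) =
      (((Tp (p + 1) : ℤ) - (Tm (p + 1) : ℤ)) - ((Tp p : ℤ) - (Tm p : ℤ)))) :
    ∀ p : ℤ, ((Tp p : ℤ) - (Tm p : ℤ)) =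
      ∑ᶠ i ∈ Set.Iio p, ((Bp i : ℤ) - (Bm i : ℤ)) := by
  set f : ℤ → ℤ := fun i => (Tp i : ℤ) - (Tm i : ℤ) with hf
  set g : ℤ → ℤ := fun i => (Bp i : ℤ) - (Bm i : ℤ) with hg
  have hfin : (Function.support Bp ∪ Function.support Bm ∪ Function.support Tp ∪
      Function.support Tm).Finite := ((hBp.union hBm).union hTp).union hTm
  obtain ⟨b, hb⟩ := hfin.bddBelow
  -- below b everything vanishes
  have hzero : ∀ x : ℤ, x < b → f x = 0 ∧ g x = 0 := by
    intro x hx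
    have hBpx : Bp x = 0 := by
      by_contra h
      have hle : b ≤ x := hb (show x ∈ _ by
        simp only [Set.mem_union, Function.mem_support]; tauto)
      omega
    have hBmx : Bm x = 0 := by
      by_contra h
      have hle : b ≤ x := hb (show x ∈ _ by
        simp only [Set.mem_union, Function.mem_support]; tauto)
      omega
    have hTpx : Tp x = 0 := by
      by_contra h
      have hle : b ≤ x := hb (show x ∈ _ by
        simp only [Set.mem_union, Function.mem_support]; tauto)
      omega
    have hTmx : Tm x = 0 := by
      by_contra h
      have hle : b ≤ x := hb (show x ∈ _ by
        simp only [Set.mem_union, Function.mem_support]; tauto)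
      omega
    simp [hf, hg, hBpx, hBmx, hTpx, hTmx]
  set N : ℤ := b - 1 with hN
  have hfN : f N = 0 := (hzero N (by omega)).1
  have hstep : ∀ q : ℤ, f (q + 1) = f q + g q := by
    intro q
    have := hstar q
    simp only [hf, hg] at *
    omega
  -- telescoping
  have key : ∀ n : ℕ, f (N + n) = ∑ i ∈ Finset.Ico N (N + (n : ℤ)), g i := by
    intro n
    induction n with
    | zero => simpa using hfN
    | succ k ih =>
        have h1 : N + ((k + 1 : ℕ) : ℤ) = (N + (k : ℤ)) + 1 := by push_cast; ring
        have h2 : Finset.Ico N (N + (k : ℤ) + 1) =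
            insert (N + (k : ℤ)) (Finset.Ico N (N + (k : ℤ))) := by
          ext x
          simp only [Finset.mem_Ico, Finset.mem_insert]
          omega
        rw [h1, hstep (N + (k : ℤ)), ih, h2, Finset.sum_insert (by simp)]
        ring
  intro p
  have hsum : ∑ᶠ i ∈ Set.Iio p, g i = ∑ i ∈ Finset.Ico N p, g i := by
    apply finsum_mem_eq_sum_of_inter_support_eq
    ext x
    simp only [Set.mem_inter_iff, Set.mem_Iio, Finset.coe_Ico, Set.mem_Ico,
      Function.mem_support]
    constructor
    · rintro ⟨hx, hgx⟩
      refine ⟨⟨?_, hx⟩, hgx⟩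
      by_contra h
      exact hgx ((hzero x (by omega)).2)
    · rintro ⟨⟨_, hx⟩, hgx⟩
      exact ⟨hx, hgx⟩
  rw [show (∑ᶠ i ∈ Set.Iio p, ((Bp i : ℤ) - (Bm i : ℤ))) = ∑ᶠ i ∈ Set.Iio p, g i from rfl,
    hsum]
  by_cases hp : N ≤ p
  · have hn : p = N + ((p - N).toNat : ℤ) := by omega
    rw [show ((Tp p : ℤ) - (Tm p : ℤ)) = f p from rfl, hn, key]
  · have h1 : f p = 0 := (hzero p (by omega)).1
    have h2 : Finset.Ico N p = ∅ := Finset.Ico_eq_empty (by omega)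
    rw [show ((Tp p : ℤ) - (Tm p : ℤ)) = f p from rfl, h1, h2, Finset.sum_empty]
end

section
/- Let B⁺, B⁻, T⁺, T⁻ : ℤ → ℕ be finitely supported and satisfy the edge-count relation (⋆). Then for every integer p, (T⁺(p) : ℤ) − T⁻(p) = − ∑_{i ≥ p} ((B⁺(i) : ℤ) − B⁻(i)), where the sum (over all integers i ≥ p) is finite since B± are finitely supported. -/
/-- Final corollary, second equality: the signed triple point count at index `p`
equals minus the signed branch point count over all indices `i ≥ p`. -/
theorem triple_points_eq_neg_sum_branch_above
    (Bp Bm Tp Tm : ℤ → ℕ)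
    (hBp : (Function.support Bp).Finite) (hBm : (Function.support Bm).Finite)
    (hTp : (Function.support Tp).Finite) (hTm : (Function.support Tm).Finite)
    (hstar : ∀ p : ℤ, ((Bp p : ℤ) - (Bm p : ℤ)) =
      (((Tp (p + 1) : ℤ) - (Tm (p + 1) : ℤ)) - ((Tp p : ℤ) - (Tm p : ℤ)))) :
    ∀ p : ℤ, ((Tp p : ℤ) - (Tm p : ℤ)) =
      -∑ᶠ i ∈ Set.Ici p, ((Bp i : ℤ) - (Bm i : ℤ)) := by
  intro p
  obtain ⟨b, hb⟩ := (hBp.union (hBm.union (hTp.union hTm))).bddAbove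
  have hzero : ∀ i : ℤ, b < i → Bp i = 0 ∧ Bm i = 0 ∧ Tp i = 0 ∧ Tm i = 0 := by
    intro i hi
    refine ⟨?_, ?_, ?_, ?_⟩ <;>
    · by_contra h
      exact absurd (hb (by simp [Function.mem_support, h] : i ∈ _)) (not_le.mpr hi)
  set N : ℤ := max (b + 1) p with hN
  have hNp : p ≤ N := le_max_right _ _
  have hNb : b < N := lt_of_lt_of_le (lt_add_one b) (le_max_left _ _)
  have tele : ∀ M : ℤ, p ≤ M →
      ∑ i ∈ Finset.Ico p M, ((Bp i : ℤ) - (Bm i : ℤ))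
        = ((Tp M : ℤ) - Tm M) - ((Tp p : ℤ) - Tm p) := by
    refine Int.le_induction ?_ ?_
    · simp
    · intro M hM ih
      have hins : Finset.Ico p (M + 1) = insert M (Finset.Ico p M) := by
        ext x; simp only [Finset.mem_Ico, Finset.mem_insert]; omega
      rw [hins, Finset.sum_insert (by simp), ih]
      have := hstar M
      linarith
  have hsum : ∑ᶠ i ∈ Set.Ici p, ((Bp i : ℤ) - (Bm i : ℤ))
      = ∑ i ∈ Finset.Ico p N, ((Bp i : ℤ) - (Bm i : ℤ)) := by
    apply finsum_mem_eq_sum_of_inter_support_eq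
    ext x
    simp only [Set.mem_inter_iff, Set.mem_Ici, Function.mem_support,
      Finset.coe_Ico, Set.mem_Ico]
    constructor
    · rintro ⟨hx, hne⟩
      refine ⟨⟨hx, ?_⟩, hne⟩
      by_contra h
      push_neg at h
      obtain ⟨h1, h2, -, -⟩ := hzero x (lt_of_lt_of_le hNb h)
      simp [h1, h2] at hne
    · rintro ⟨⟨hx, -⟩, hne⟩
      exact ⟨hx, hne⟩
  obtain ⟨-, -, h3, h4⟩ := hzero N hNb
  rw [hsum, tele N hNp, h3, h4]
  ring
end

section
/- Let B⁺, B⁻, T⁺, T⁻, D⁺, D⁻ : ℤ → ℕ be finitely supported and satisfy the generalized edge-count relation (⋆'). Then for every function x : ℤ → ℤ, setting y(q) = x(q) − x(q−1) and z(r) = 2·x(r), one has ∑_{p ∈ ℤ} x(p)·((B⁺(p) : ℤ) − B⁻(p)) + ∑_{q ∈ ℤ} y(q)·((T⁺(q) : ℤ) − T⁻(q)) + ∑_{r ∈ ℤ} z(r)·((D⁺(r) : ℤ) − D⁻(r)) = 0 (all sums are finite by finite support). -/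
/-- Generalized theorem for immersed surfaces with singular points: with
weights `y q = x q - x (q - 1)` and `z r = 2 * x r`, the weighted signed sums
of branch points, triple points and singular points cancel. -/
theorem alexander_numbering_formula_with_singular_points
    (Bp Bm Tp Tm Dp Dm : ℤ → ℕ)
    (hBp : (Function.support Bp).Finite) (hBm : (Function.support Bm).Finite)
    (hTp : (Function.support Tp).Finite) (hTm : (Function.support Tm).Finite)
    (hDp : (Function.support Dp).Finite) (hDm : (Function.support Dm).Finite)
    (hstar : ∀ p : ℤ, ((Bp p : ℤ) - (Bm p : ℤ)) + 2 * ((Dp p : ℤ) - (Dm p : ℤ)) =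
      (((Tp (p + 1) : ℤ) - (Tm (p + 1) : ℤ)) - ((Tp p : ℤ) - (Tm p : ℤ))))
    (x : ℤ → ℤ) (y z : ℤ → ℤ)
    (hy : ∀ q : ℤ, y q = x q - x (q - 1)) (hz : ∀ r : ℤ, z r = 2 * x r) :
    (∑ᶠ p : ℤ, x p * ((Bp p : ℤ) - (Bm p : ℤ))) +
      (∑ᶠ q : ℤ, y q * ((Tp q : ℤ) - (Tm q : ℤ))) +
      (∑ᶠ r : ℤ, z r * ((Dp r : ℤ) - (Dm r : ℤ))) = 0 := by
  set b : ℤ → ℤ := fun p => (Bp p : ℤ) - (Bm p : ℤ) with hb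
  set t : ℤ → ℤ := fun p => (Tp p : ℤ) - (Tm p : ℤ) with ht
  set d : ℤ → ℤ := fun p => (Dp p : ℤ) - (Dm p : ℤ) with hd
  have hbfin : (Function.support b).Finite := by
    apply (hBp.union hBm).subset
    intro p hp
    by_contra h
    simp only [Set.mem_union, Function.mem_support, not_or, not_not] at h
    simp [Function.mem_support, hb, h.1, h.2] at hp
  have htfin : (Function.support t).Finite := by
    apply (hTp.union hTm).subset
    intro p hp
    by_contra h
    simp only [Set.mem_union, Function.mem_support, not_or, not_not] at h
    simp [Function.mem_support, ht, h.1, h.2] at hp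
  have hdfin : (Function.support d).Finite := by
    apply (hDp.union hDm).subset
    intro p hp
    by_contra h
    simp only [Set.mem_union, Function.mem_support, not_or, not_not] at h
    simp [Function.mem_support, hd, h.1, h.2] at hp
  have hmul : ∀ (f : ℤ → ℤ), (Function.support f).Finite →
      (Function.support (fun p => x p * f p)).Finite := by
    intro f hf
    apply hf.subset
    intro p hp
    simp only [Function.mem_support] at hp ⊢
    intro h; exact hp (by simp [h])
  have htfin1 : (Function.support (fun p => x p * t (p + 1))).Finite := by
    apply Set.Finite.subset (Set.Finite.preimage (f := fun p : ℤ => p + 1)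
      (Set.injOn_of_injective (add_left_injective 1)) htfin)
    intro p hp
    simp only [Function.mem_support, Set.mem_preimage] at hp ⊢
    intro h; exact hp (by simp [h])
  have hf23 : (Function.support (fun p => x p * t p - x p * t (p + 1))).Finite := by
    apply ((hmul t htfin).union htfin1).subset
    intro p hp
    simp only [Function.mem_support, Set.mem_union] at hp ⊢
    by_contra h
    push_neg at h
    exact hp (by rw [h.1, h.2, sub_zero])
  have hf123 : (Function.support
      (fun p => x p * b p + (x p * t p - x p * t (p + 1)))).Finite := by
    apply ((hmul b hbfin).union hf23).subset
    intro p hp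
    simp only [Function.mem_support, Set.mem_union] at hp ⊢
    by_contra h
    push_neg at h
    exact hp (by rw [h.1, h.2, add_zero])
  have hf4 : (Function.support (fun p => 2 * (x p * d p))).Finite := by
    apply (hmul d hdfin).subset
    intro p hp
    simp only [Function.mem_support] at hp ⊢
    intro h; exact hp (by rw [h, mul_zero])
  -- change of variables
  have hshift : (∑ᶠ q : ℤ, x (q - 1) * t q) = ∑ᶠ p : ℤ, x p * t (p + 1) := by
    rw [← finsum_comp_equiv (Equiv.addRight (1 : ℤ)) (f := fun q => x (q - 1) * t q)]
    simp
  have hsh_fin : (Function.support (fun q => x (q - 1) * t q)).Finite := by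
    apply htfin.subset
    intro q hq
    simp only [Function.mem_support] at hq ⊢
    intro h; exact hq (by rw [h, mul_zero])
  have hmid : (∑ᶠ q : ℤ, y q * t q)
      = (∑ᶠ q : ℤ, x q * t q) - ∑ᶠ p : ℤ, x p * t (p + 1) := by
    rw [← hshift, ← finsum_sub_distrib (hmul t htfin) hsh_fin]
    apply finsum_congr
    intro q
    rw [hy q]
    ring
  have hzz : (∑ᶠ r : ℤ, z r * d r) = ∑ᶠ r : ℤ, 2 * (x r * d r) := by
    apply finsum_congr; intro r; rw [hz r]; ring
  have key : (∑ᶠ p : ℤ, (x p * b p + (x p * t p - x p * t (p + 1)) + 2 * (x p * d p)))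
      = (∑ᶠ p : ℤ, x p * b p) + ((∑ᶠ q : ℤ, x q * t q) - ∑ᶠ p : ℤ, x p * t (p + 1))
        + ∑ᶠ r : ℤ, 2 * (x r * d r) := by
    rw [finsum_add_distrib hf123 hf4, finsum_add_distrib (hmul b hbfin) hf23,
      finsum_sub_distrib (hmul t htfin) htfin1]
  rw [hmid, hzz, ← key]
  have hzero : ∀ p : ℤ,
      x p * b p + (x p * t p - x p * t (p + 1)) + 2 * (x p * d p) = 0 := by
    intro p
    simp only [hb, ht, hd]
    linear_combination x p * hstar p
  simp only [hzero, finsum_zero]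
end
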